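/- arXiv:math/0402311 — 4 statements merged into one kernel-verified Lean document; each statement's English description precedes it below -/
import Mathlib

section
/- Let f be a C^2 function on the positive cone Γ₊ in ℝⁿ that is homogeneous of degree one and strictly monotone increasing in each argument. Then the function f* defined by f*(x₁,...,xₙ) = -f(x₁⁻¹,...,xₙ⁻¹) is concave on Γ₊ if and only if for every x ∈ Γ₊ the matrix with entries ∂²f/∂xᵢ∂xⱼ(x) + 2(∂f/∂xᵢ)(x)·xᵢ⁻¹·δᵢⱼ is positive semidefinite. -/
noncomputable section

/-- The open positive cone in `ℝⁿ`. -/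
def posCone (n : ℕ) : Set (Fin n → ℝ) := {x | ∀ i, 0 < x i}

/-!
Since `-f*` is `F z = f z⁻¹`, the claim is that `F` is convex on the cone exactly when the form
is nonnegative. Convexity of a `C²` function on an open convex set means nonnegativity of its
second derivative along every line. Along `t ↦ z + t • d` the chain rule computes it as the form
at `(y, ξ) = ((z + t • d)⁻¹, d * y ^ 2)`, and these pairs sweep out all of `posCone n × ℝⁿ`.
-/

open Set

lemma add_smul_eq_of_add_eq_one {R M : Type*} [CommRing R] [AddCommGroup M] [Module R M]
    (x v : M) {a b : R} (hab : a + b = 1) (t u : R) :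
    x + (a * t + b * u) • v = a • (x + t • v) + b • (x + u • v) := by
  linear_combination (norm := module) (-1 : R) • hab • x

section LineRestriction

variable {𝕜 E : Type*} [Field 𝕜] [LinearOrder 𝕜] [AddCommGroup E] [Module 𝕜 E]

lemma Convex.preimage_line {s : Set E} (hs : Convex 𝕜 s) (x v : E) :
    Convex 𝕜 {t : 𝕜 | x + t • v ∈ s} := by
  intro t ht u hu a b ha hb hab
  simpa only [mem_ofPred_eq, smul_eq_mul, add_smul_eq_of_add_eq_one x v hab] using
    hs ht hu ha hb hab

theorem convexOn_iff_forall_convexOn_line {β : Type*} [AddCommMonoid β] [PartialOrder β]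
    [Module 𝕜 β] {s : Set E} {φ : E → β} (hs : Convex 𝕜 s) :
    ConvexOn 𝕜 s φ ↔
      ∀ x v : E, ConvexOn 𝕜 {t : 𝕜 | x + t • v ∈ s} (fun t => φ (x + t • v)) := by
  refine ⟨fun hφ x v => ⟨hs.preimage_line x v, fun t ht u hu a b ha hb hab => ?_⟩,
    fun h => ⟨hs, fun p hp q hq a b ha hb hab => ?_⟩⟩
  · simpa only [smul_eq_mul, add_smul_eq_of_add_eq_one x v hab] using hφ.2 ht hu ha hb hab
  · have hline := (h p (q - p)).2 (x := 0) (y := 1) (by simpa using hp) (by simpa using hq)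
      ha hb hab
    simp only [smul_eq_mul, mul_zero, mul_one, zero_add, zero_smul, add_zero, one_smul,
      add_sub_cancel] at hline
    convert hline using 2
    linear_combination (norm := module) hab • p

end LineRestriction

theorem convexOn_iff_forall_nonneg_of_hasDerivAt2 {I : Set ℝ} (hI : IsOpen I)
    (hIc : Convex ℝ I) {g g' g'' : ℝ → ℝ} (hg : ∀ t ∈ I, HasDerivAt g (g' t) t)
    (hg' : ∀ t ∈ I, HasDerivAt g' (g'' t) t) :
    ConvexOn ℝ I g ↔ ∀ t ∈ I, 0 ≤ g'' t := by
  refine ⟨fun hconv t ht => ?_, fun h => ?_⟩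
  · have hmono : MonotoneOn g' I :=
      (hconv.monotoneOn_deriv fun s hs => (hg s hs).differentiableAt).congr
        fun s hs => (hg s hs).deriv
    have hacc : AccPt t (Filter.principal I) := by
      simpa using (PerfectSpace.univ_preperfect t (mem_univ t)).nhds_inter (hI.mem_nhds ht)
    exact (hg' t ht).hasDerivWithinAt.nonneg_of_monotoneOn hacc hmono
  · have hcont : ContinuousOn g I := fun t ht => (hg t ht).continuousAt.continuousWithinAt
    rw [← hI.interior_eq] at hg hg' h
    exact convexOn_of_hasDerivWithinAt2_nonneg hIc hcont
      (fun t ht => (hg t ht).hasDerivWithinAt) (fun t ht => (hg' t ht).hasDerivWithinAt) h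

theorem posCone_eq_pi (n : ℕ) : posCone n = univ.pi fun _ => Ioi 0 := by
  ext x
  simp [posCone]

theorem isOpen_posCone (n : ℕ) : IsOpen (posCone n) := by
  rw [posCone_eq_pi]
  exact isOpen_set_pi finite_univ fun _ _ => isOpen_Ioi

theorem convex_posCone (n : ℕ) : Convex ℝ (posCone n) := by
  rw [posCone_eq_pi]
  exact convex_pi fun _ _ => convex_Ioi 0

theorem inv_mem_posCone {n : ℕ} {x : Fin n → ℝ} (hx : x ∈ posCone n) : x⁻¹ ∈ posCone n :=
  fun i => inv_pos.2 (hx i)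

section PiCoordinates

variable {ι : Type*}

theorem hasDerivAt_inv_line {z d : ι → ℝ} {t : ℝ} (h : ∀ i, (z + t • d) i ≠ 0) :
    HasDerivAt (fun s => (z + s • d)⁻¹) (-(d * (z + t • d)⁻¹ ^ 2)) t := by
  refine hasDerivAt_pi.2 fun i => ?_
  have hi : z i + t * d i ≠ 0 := by simpa using h i
  refine (((hasDerivAt_mul_const (d i)).const_add (z i)).fun_inv hi).congr_deriv ?_
  simp [div_eq_mul_inv]

theorem hasDerivAt_mul_inv_line_sq {z d : ι → ℝ} {t : ℝ} (h : ∀ i, (z + t • d) i ≠ 0) :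
    HasDerivAt (fun s => d * (z + s • d)⁻¹ ^ 2)
      (-(2 * (z + t • d) * (d * (z + t • d)⁻¹ ^ 2) ^ 2)) t := by
  refine hasDerivAt_pi.2 fun i => ?_
  have hi : z i + t * d i ≠ 0 := by simpa using h i
  refine ((((hasDerivAt_mul_const (d i)).const_add (z i)).fun_inv hi).fun_pow 2
    |>.const_mul (d i)).congr_deriv ?_
  simp only [Pi.neg_apply, Pi.mul_apply, Pi.ofNat_apply, Pi.add_apply, Pi.smul_apply,
    smul_eq_mul, Pi.pow_apply, Pi.inv_apply, Nat.cast_ofNat, Nat.add_one_sub_one, pow_one]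
  field_simp

variable [Fintype ι] [DecidableEq ι]

theorem ContinuousLinearMap.apply_eq_sum_mul_single (L : (ι → ℝ) →L[ℝ] ℝ) (v : ι → ℝ) :
    L v = ∑ i, L (Pi.single i 1) * v i := by
  conv_lhs => rw [← Finset.univ_sum_single v]
  refine (map_sum L _ _).trans (Finset.sum_congr rfl fun i _ => ?_)
  have hsingle : Pi.single i (v i) = v i • Pi.single i (1 : ℝ) := by
    rw [← Pi.single_smul', smul_eq_mul, mul_one]
  rw [hsingle, map_smul, smul_eq_mul, mul_comm]

def dualHessForm (f : (ι → ℝ) → ℝ) (x ξ : ι → ℝ) : ℝ :=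
  fderiv ℝ (fderiv ℝ f) x ξ ξ + 2 * ∑ i, fderiv ℝ f x (Pi.single i 1) * (x i)⁻¹ * (ξ i) ^ 2

end PiCoordinates

section DualFunction

variable {n : ℕ} {f : (Fin n → ℝ) → ℝ} {z d : Fin n → ℝ} {t : ℝ}

theorem hasDerivAt_comp_inv_line (hf : ContDiffOn ℝ 2 f (posCone n))
    (ht : z + t • d ∈ posCone n) :
    HasDerivAt (fun s => f (z + s • d)⁻¹)
      (-fderiv ℝ f (z + t • d)⁻¹ (d * (z + t • d)⁻¹ ^ 2)) t := by
  have hy := inv_mem_posCone ht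
  have hdf : HasFDerivAt f (fderiv ℝ f (z + t • d)⁻¹) (z + t • d)⁻¹ :=
    ((hf.contDiffAt ((isOpen_posCone n).mem_nhds hy)).differentiableAt two_ne_zero).hasFDerivAt
  exact (hdf.comp_hasDerivAt t (hasDerivAt_inv_line fun i => (ht i).ne')).congr_deriv
    (map_neg _ _)

theorem hasDerivAt_fderiv_comp_inv_line (hf : ContDiffOn ℝ 2 f (posCone n))
    (ht : z + t • d ∈ posCone n) :
    HasDerivAt (fun s => -fderiv ℝ f (z + s • d)⁻¹ (d * (z + s • d)⁻¹ ^ 2))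
      (dualHessForm f (z + t • d)⁻¹ (d * (z + t • d)⁻¹ ^ 2)) t := by
  have hy := inv_mem_posCone ht
  have hd2f :
      HasFDerivAt (fderiv ℝ f) (fderiv ℝ (fderiv ℝ f) (z + t • d)⁻¹) (z + t • d)⁻¹ :=
    (((hf.contDiffAt ((isOpen_posCone n).mem_nhds hy)).fderiv_right le_rfl).differentiableAt
      one_ne_zero).hasFDerivAt
  have hDf : HasDerivAt (fun s => fderiv ℝ f (z + s • d)⁻¹)
      (fderiv ℝ (fderiv ℝ f) (z + t • d)⁻¹ (-(d * (z + t • d)⁻¹ ^ 2))) t :=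
    hd2f.comp_hasDerivAt t (hasDerivAt_inv_line fun i => (ht i).ne')
  refine (hDf.clm_apply (hasDerivAt_mul_inv_line_sq fun i => (ht i).ne')).neg.congr_deriv ?_
  set y := (z + t • d)⁻¹
  set ξ := d * y ^ 2
  rw [map_neg, map_neg, neg_apply, neg_add, neg_neg, neg_neg, dualHessForm,
    ContinuousLinearMap.apply_eq_sum_mul_single (fderiv ℝ f y), Finset.mul_sum]
  congr 1
  refine Finset.sum_congr rfl fun i _ => ?_
  simp only [y, Pi.mul_apply, Pi.inv_apply, inv_inv, Pi.ofNat_apply, Pi.pow_apply]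
  ring

theorem convexOn_comp_inv_iff (hf : ContDiffOn ℝ 2 f (posCone n)) :
    ConvexOn ℝ (posCone n) (fun z => f z⁻¹) ↔
      ∀ x ∈ posCone n, ∀ ξ, 0 ≤ dualHessForm f x ξ := by
  have hline : ∀ z d : Fin n → ℝ,
      ConvexOn ℝ {t : ℝ | z + t • d ∈ posCone n} (fun t => f (z + t • d)⁻¹) ↔
        ∀ t ∈ {t : ℝ | z + t • d ∈ posCone n},
          0 ≤ dualHessForm f (z + t • d)⁻¹ (d * (z + t • d)⁻¹ ^ 2) := fun z d =>
    convexOn_iff_forall_nonneg_of_hasDerivAt2 ((isOpen_posCone n).preimage (by fun_prop))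
      ((convex_posCone n).preimage_line z d) (fun _ ht => hasDerivAt_comp_inv_line hf ht)
      (fun _ ht => hasDerivAt_fderiv_comp_inv_line hf ht)
  simp only [convexOn_iff_forall_convexOn_line (convex_posCone n), hline]
  refine ⟨fun h x hx ξ => ?_, fun h z d t ht => h _ (inv_mem_posCone ht) _⟩
  have hξ : ξ / x ^ 2 * x ^ 2 = ξ :=
    funext fun i => div_mul_cancel₀ _ (pow_ne_zero 2 (hx i).ne')
  have hat := h x⁻¹ (ξ / x ^ 2) 0 (by simpa using inv_mem_posCone hx)
  rwa [zero_smul, add_zero, inv_inv, hξ] at hat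

end DualFunction

theorem stmt0_general {n : ℕ} (f : (Fin n → ℝ) → ℝ)
    (hf : ContDiffOn ℝ 2 f (posCone n)) :
    ConcaveOn ℝ (posCone n) (fun z => -f (fun i => (z i)⁻¹)) ↔
      ∀ x ∈ posCone n, ∀ ξ : Fin n → ℝ,
        0 ≤ fderiv ℝ (fderiv ℝ f) x ξ ξ
          + 2 * ∑ i, fderiv ℝ f x (Pi.single i 1) * (x i)⁻¹ * (ξ i) ^ 2 :=
  neg_concaveOn_iff.trans (convexOn_comp_inv_iff hf)

theorem stmt0 {n : ℕ} (f : (Fin n → ℝ) → ℝ)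
    (hf : ContDiffOn ℝ 2 f (posCone n))
    (hhom : ∀ c : ℝ, 0 < c → ∀ x ∈ posCone n, f (c • x) = c * f x)
    (hmono : ∀ x ∈ posCone n, ∀ i, 0 < fderiv ℝ f x (Pi.single i 1)) :
    ConcaveOn ℝ (posCone n) (fun z => -f (fun i => (z i)⁻¹)) ↔
      ∀ x ∈ posCone n, ∀ ξ : Fin n → ℝ,
        0 ≤ fderiv ℝ (fderiv ℝ f) x ξ ξ
          + 2 * ∑ i, fderiv ℝ f x (Pi.single i 1) * (x i)⁻¹ * (ξ i) ^ 2 :=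
  stmt0_general f hf
end
end

section
/- Let f be a smooth, homogeneous degree one, strictly increasing, concave and inverse-concave function on the positive cone Γ₊ ⊂ ℝⁿ. For any r ∈ [-1,1] \ {0}, the function f_r(x₁,...,xₙ) = (f(x₁ʳ,...,xₙʳ))^{1/r} is also smooth, homogeneous of degree one, strictly increasing, concave, and inverse-concave on Γ₊. -/
noncomputable section

/-- Coordinatewise inversion. -/
def invPt {n : ℕ} (x : Fin n → ℝ) : Fin n → ℝ := fun i => (x i)⁻¹

namespace Stmt2Aux

variable {n : ℕ}

lemma posCone_convex : Convex ℝ (posCone n) := by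
  intro x hx y hy a b ha hb hab i
  simp only [Pi.add_apply, Pi.smul_apply, smul_eq_mul]
  rcases eq_or_lt_of_le ha with rfl | ha'
  · have hb1 : b = 1 := by linarith
    simpa [hb1] using hy i
  · nlinarith [hx i, hy i, mul_nonneg hb (hy i).le]

lemma posCone_isOpen : IsOpen (posCone n) := by
  have : posCone n = ⋂ i, (fun x : Fin n → ℝ => x i) ⁻¹' Set.Ioi 0 := by
    ext x; simp [posCone]
  rw [this]
  exact isOpen_iInter_of_finite fun i => isOpen_Ioi.preimage (continuous_apply i)

lemma smul_mem_posCone {c : ℝ} (hc : 0 < c) {x : Fin n → ℝ} (hx : x ∈ posCone n) :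
    c • x ∈ posCone n := fun i => by
  simpa [smul_eq_mul] using mul_pos hc (hx i)

lemma invPt_mem {x : Fin n → ℝ} (hx : x ∈ posCone n) : invPt x ∈ posCone n :=
  fun i => inv_pos.2 (hx i)

lemma invPt_invPt {x : Fin n → ℝ} (hx : x ∈ posCone n) : invPt (invPt x) = x := by
  funext i; simp [invPt]

lemma update_mem_posCone {x : Fin n → ℝ} (hx : x ∈ posCone n) {i : Fin n} {v : ℝ}
    (hv : 0 < v) : Function.update x i v ∈ posCone n := fun j => by
  rcases eq_or_ne j i with rfl | h
  · simpa using hv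
  · simpa [Function.update_of_ne h] using hx j

lemma rpow_mem_posCone {x : Fin n → ℝ} (hx : x ∈ posCone n) (s : ℝ) :
    (fun i => x i ^ s) ∈ posCone n := fun i => Real.rpow_pos_of_pos (hx i) s

lemma concaveOn_congr' {g h : (Fin n → ℝ) → ℝ} (he : ∀ x ∈ posCone n, g x = h x)
    (hg : ConcaveOn ℝ (posCone n) g) : ConcaveOn ℝ (posCone n) h := by
  refine ⟨hg.1, fun x hx y hy a b ha hb hab => ?_⟩
  rw [← he _ hx, ← he _ hy, ← he _ (hg.1 hx hy ha hb hab)]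
  exact hg.2 hx hy ha hb hab

variable {f : (Fin n → ℝ) → ℝ}

lemma mono_lt (hmono : ∀ x ∈ posCone n, ∀ i, ∀ t : ℝ, 0 < t →
      f x < f (Function.update x i (x i + t))) :
    ∀ x ∈ posCone n, ∀ i, ∀ b : ℝ, x i < b → f x < f (Function.update x i b) := by
  intro x hx i b hb
  have h := hmono x hx i (b - x i) (by linarith)
  have e : x i + (b - x i) = b := by ring
  rwa [e] at h

lemma mono_le (hmono : ∀ x ∈ posCone n, ∀ i, ∀ t : ℝ, 0 < t →
      f x < f (Function.update x i (x i + t))) :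
    ∀ x ∈ posCone n, ∀ y ∈ posCone n, (∀ i, x i ≤ y i) → f x ≤ f y := by
  intro x hx y hy hxy
  have key : ∀ s : Finset (Fin n), f x ≤ f (fun i => if i ∈ s then y i else x i) := by
    intro s
    induction s using Finset.induction_on with
    | empty => simp
    | @insert a s hj ih =>
      have hz : (fun i => if i ∈ s then y i else x i) ∈ posCone n := by
        intro i; by_cases h : i ∈ s <;> simp [h, hx i, hy i]
      have hupd : (fun i => if i ∈ insert a s then y i else x i)
          = Function.update (fun i => if i ∈ s then y i else x i) a (y a) := by
        funext j
        rcases eq_or_ne j a with rfl | hja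
        · simp
        · simp [Function.update_of_ne hja, hja]
      refine ih.trans ?_
      rw [hupd]
      have hza : (fun i => if i ∈ s then y i else x i) a = x a := by simp [hj]
      rcases (hxy a).lt_or_eq with h | h
      · exact (mono_lt hmono _ hz a (y a) (by simpa [hj] using h)).le
      · have : y a = (fun i => if i ∈ s then y i else x i) a := by rw [hza]; exact h.symm
        rw [this, Function.update_eq_self]
  simpa using key Finset.univ

lemma fpos (hn : 0 < n)
    (hhom : ∀ c : ℝ, 0 < c → ∀ x ∈ posCone n, f (c • x) = c * f x)
    (hmono : ∀ x ∈ posCone n, ∀ i, ∀ t : ℝ, 0 < t →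
      f x < f (Function.update x i (x i + t))) :
    ∀ x ∈ posCone n, 0 < f x := by
  intro x hx
  set i0 : Fin n := ⟨0, hn⟩
  have h1 : f x < f (Function.update x i0 (x i0 + x i0)) := hmono x hx i0 (x i0) (hx i0)
  have hmem : Function.update x i0 (x i0 + x i0) ∈ posCone n :=
    update_mem_posCone hx (by linarith [hx i0])
  have h2mem : (2 : ℝ) • x ∈ posCone n := smul_mem_posCone two_pos hx
  have h2 : f (Function.update x i0 (x i0 + x i0)) ≤ f ((2 : ℝ) • x) := by
    refine mono_le hmono _ hmem _ h2mem ?_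
    intro j
    rcases eq_or_ne j i0 with rfl | h
    · simp [smul_eq_mul]; linarith
    · simp [Function.update_of_ne h, smul_eq_mul]; linarith [hx j]
  have h3 : f ((2 : ℝ) • x) = 2 * f x := hhom 2 two_pos x hx
  linarith

end Stmt2Aux
namespace Stmt2Aux

variable {n : ℕ}

/-- A positive, 1-homogeneous, quasiconcave function on the cone is concave. -/
lemma concave_of_quasi (h : (Fin n → ℝ) → ℝ)
    (hpos : ∀ x ∈ posCone n, 0 < h x)
    (hhom : ∀ c : ℝ, 0 < c → ∀ x ∈ posCone n, h (c • x) = c * h x)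
    (hq : ∀ x ∈ posCone n, ∀ y ∈ posCone n, ∀ a b : ℝ, 0 ≤ a → 0 ≤ b → a + b = 1 →
      min (h x) (h y) ≤ h (a • x + b • y)) :
    ConcaveOn ℝ (posCone n) h := by
  refine ⟨posCone_convex, ?_⟩
  intro x hx y hy a b ha hb hab
  rcases eq_or_lt_of_le ha with rfl | ha'
  · have hb1 : b = 1 := by linarith
    simp [hb1]
  rcases eq_or_lt_of_le hb with rfl | hb'
  · have ha1 : a = 1 := by linarith
    simp [ha1]
  have hp := hpos x hx
  have hqy := hpos y hy
  set p := h x with hpdef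
  set q := h y with hqdef
  set t : ℝ := a * p + b * q with htdef
  have ht : 0 < t := by positivity
  have hx' : p⁻¹ • x ∈ posCone n := smul_mem_posCone (inv_pos.2 hp) hx
  have hy' : q⁻¹ • y ∈ posCone n := smul_mem_posCone (inv_pos.2 hqy) hy
  have hx1 : h (p⁻¹ • x) = 1 := by
    rw [hhom p⁻¹ (inv_pos.2 hp) x hx]; field_simp; exact hpdef.symm
  have hy1 : h (q⁻¹ • y) = 1 := by
    rw [hhom q⁻¹ (inv_pos.2 hqy) y hy]; field_simp; exact hqdef.symm
  have hc1 : (0:ℝ) ≤ a * p / t := by positivity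
  have hc2 : (0:ℝ) ≤ b * q / t := by positivity
  have hcs : a * p / t + b * q / t = 1 := by field_simp; exact htdef.symm
  have hzmem : (a * p / t) • (p⁻¹ • x) + (b * q / t) • (q⁻¹ • y) ∈ posCone n :=
    posCone_convex hx' hy' hc1 hc2 hcs
  have key : a • x + b • y = t • ((a * p / t) • (p⁻¹ • x) + (b * q / t) • (q⁻¹ • y)) := by
    funext j
    simp only [Pi.add_apply, Pi.smul_apply, smul_eq_mul]
    field_simp
  have h1 : (1:ℝ) ≤ h ((a * p / t) • (p⁻¹ • x) + (b * q / t) • (q⁻¹ • y)) := by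
    have := hq _ hx' _ hy' _ _ hc1 hc2 hcs
    rwa [hx1, hy1, min_self] at this
  have : h (a • x + b • y) = t * h ((a * p / t) • (p⁻¹ • x) + (b * q / t) • (q⁻¹ • y)) := by
    rw [key]; exact hhom t ht _ hzmem
  rw [this]
  simp only [smul_eq_mul]
  nlinarith

/-- `x ↦ -(G x)⁻¹` is concave for `G` concave positive. -/
lemma neg_inv_concaveOn {G : (Fin n → ℝ) → ℝ} (hG : ConcaveOn ℝ (posCone n) G)
    (hpos : ∀ x ∈ posCone n, 0 < G x) :
    ConcaveOn ℝ (posCone n) (fun x => -(G x)⁻¹) := by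
  refine ⟨posCone_convex, ?_⟩
  intro x hx y hy a b ha hb hab
  have hp := hpos x hx
  have hq := hpos y hy
  set p := G x
  set q := G y
  have hmid := hpos _ (posCone_convex hx hy ha hb hab)
  have hsum : 0 < a * p + b * q := by
    nlinarith [mul_nonneg ha (sub_nonneg.2 (min_le_left p q)),
      mul_nonneg hb (sub_nonneg.2 (min_le_right p q)), lt_min hp hq]
  have hM : a * p + b * q ≤ G (a • x + b • y) := by
    simpa [smul_eq_mul] using hG.2 hx hy ha hb hab
  have hinv2 : (G (a • x + b • y))⁻¹ ≤ (a * p + b * q)⁻¹ := inv_anti₀ hsum hM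
  have hscal : (a * p + b * q)⁻¹ ≤ a * p⁻¹ + b * q⁻¹ := by
    have e : a * p⁻¹ + b * q⁻¹ = (a * q + b * p) / (p * q) := by field_simp
    have h2 : p * q * (a + b) ^ 2 = p * q := by rw [hab]; ring
    rw [e, inv_eq_one_div, div_le_div_iff₀ hsum (mul_pos hp hq)]
    nlinarith [mul_nonneg (mul_nonneg ha hb) (sq_nonneg (p - q)), h2]
  simp only [smul_eq_mul]
  have : -(G (a • x + b • y))⁻¹ ≥ -(a * p⁻¹ + b * q⁻¹) := by
    have := hinv2.trans hscal
    linarith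
  linarith

end Stmt2Aux
namespace Stmt2Aux

variable {n : ℕ}

def IsGood (n : ℕ) (f : (Fin n → ℝ) → ℝ) : Prop :=
  ContDiffOn ℝ (⊤ : ℕ∞) f (posCone n) ∧
  (∀ c : ℝ, 0 < c → ∀ x ∈ posCone n, f (c • x) = c * f x) ∧
  (∀ x ∈ posCone n, ∀ i, ∀ t : ℝ, 0 < t →
      f x < f (Function.update x i (x i + t))) ∧
  ConcaveOn ℝ (posCone n) f ∧
  ConcaveOn ℝ (posCone n) (fun x => -f (invPt x))

lemma isGood_congr {f g : (Fin n → ℝ) → ℝ} (he : ∀ x ∈ posCone n, g x = f x)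
    (hf : IsGood n f) : IsGood n g := by
  obtain ⟨h1, h2, h3, h4, h5⟩ := hf
  refine ⟨h1.congr he, ?_, ?_, concaveOn_congr' (fun x hx => (he x hx).symm) h4,
    concaveOn_congr' (fun x hx => by rw [he _ (invPt_mem hx)]) h5⟩
  · intro c hc x hx
    rw [he _ (smul_mem_posCone hc hx), he _ hx]
    exact h2 c hc x hx
  · intro x hx i t ht
    rw [he _ hx, he _ (update_mem_posCone hx (lt_trans (hx i) (by linarith [hx i])))]
    exact h3 x hx i t ht

lemma dual_isGood (hn : 0 < n) {f : (Fin n → ℝ) → ℝ} (hf : IsGood n f) :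
    IsGood n (fun x => (f (invPt x))⁻¹) := by
  obtain ⟨hsm, hhom, hmono, hconc, hinv⟩ := hf
  have hfp : ∀ x ∈ posCone n, 0 < f x := fpos hn hhom hmono
  have Fhom : ∀ c : ℝ, 0 < c → ∀ x ∈ posCone n,
      (f (invPt (c • x)))⁻¹ = c * (f (invPt x))⁻¹ := by
    intro c hc x hx
    have e : invPt (c • x) = c⁻¹ • invPt x := by
      funext i; simp [invPt, mul_inv, smul_eq_mul, mul_comm]
    rw [e, hhom c⁻¹ (inv_pos.2 hc) _ (invPt_mem hx), mul_inv, inv_inv]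
  have Fpos : ∀ x ∈ posCone n, 0 < (f (invPt x))⁻¹ :=
    fun x hx => inv_pos.2 (hfp _ (invPt_mem hx))
  refine ⟨?_, Fhom, ?_, ?_, ?_⟩
  · -- smoothness
    intro x hx
    refine ContDiffAt.contDiffWithinAt ?_
    have hinvPt : ContDiffAt ℝ (⊤ : ℕ∞) (invPt : (Fin n → ℝ) → (Fin n → ℝ)) x := by
      rw [contDiffAt_pi]
      intro i
      exact ((ContinuousLinearMap.proj i : ((Fin n) → ℝ) →L[ℝ] ℝ).contDiff.contDiffAt).inv
        (ne_of_gt (hx i))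
    have hfAt : ContDiffAt ℝ (⊤ : ℕ∞) f (invPt x) :=
      hsm.contDiffAt (posCone_isOpen.mem_nhds (invPt_mem hx))
    exact (hfAt.comp x hinvPt).inv (ne_of_gt (hfp _ (invPt_mem hx)))
  · -- monotonicity
    intro x hx i t ht
    have hxi := hx i
    have hyi : 0 < x i + t := by linarith
    have hy : Function.update x i (x i + t) ∈ posCone n := update_mem_posCone hx hyi
    have e : invPt (Function.update x i (x i + t))
        = Function.update (invPt x) i ((x i + t)⁻¹) := by
      funext j
      rcases eq_or_ne j i with rfl | h
      · simp [invPt]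
      · simp [invPt, Function.update_of_ne h]
    have e2 : Function.update (invPt (Function.update x i (x i + t))) i ((x i)⁻¹) = invPt x := by
      rw [e]
      funext j
      rcases eq_or_ne j i with rfl | h
      · simp [invPt]
      · simp [invPt, Function.update_of_ne h]
    have hlt : f (invPt (Function.update x i (x i + t))) < f (invPt x) := by
      have hmem := invPt_mem hy
      have harg : invPt (Function.update x i (x i + t)) i < (x i)⁻¹ := by
        rw [e]; simp only [Function.update_self]
        exact inv_strictAnti₀ hxi (by linarith)
      have := mono_lt hmono _ hmem i ((x i)⁻¹) harg
      rwa [e2] at this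
    exact inv_strictAnti₀ (hfp _ (invPt_mem hy)) hlt
  · -- concavity via quasiconcavity
    refine concave_of_quasi _ Fpos Fhom ?_
    intro x hx y hy a b ha hb hab
    have hmid : a • x + b • y ∈ posCone n := posCone_convex hx hy ha hb hab
    have hcc := hinv.2 hx hy ha hb hab
    simp only [smul_eq_mul] at hcc
    have hle : f (invPt (a • x + b • y)) ≤ a * f (invPt x) + b * f (invPt y) := by linarith
    have hmax : a * f (invPt x) + b * f (invPt y) ≤ max (f (invPt x)) (f (invPt y)) := by
      calc a * f (invPt x) + b * f (invPt y)
          ≤ a * max (f (invPt x)) (f (invPt y)) + b * max (f (invPt x)) (f (invPt y)) :=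
            add_le_add (mul_le_mul_of_nonneg_left (le_max_left _ _) ha)
              (mul_le_mul_of_nonneg_left (le_max_right _ _) hb)
        _ = max (f (invPt x)) (f (invPt y)) := by rw [← add_mul, hab, one_mul]
    have hmp := hfp _ (invPt_mem hmid)
    have h1 : (max (f (invPt x)) (f (invPt y)))⁻¹ ≤ (f (invPt (a • x + b • y)))⁻¹ :=
      inv_anti₀ hmp (hle.trans hmax)
    refine le_trans ?_ h1
    rcases le_total (f (invPt x)) (f (invPt y)) with h | h
    · rw [max_eq_right h]
      exact min_le_right _ _
    · rw [max_eq_left h]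
      exact min_le_left _ _
  · -- inverse concavity
    have base : ConcaveOn ℝ (posCone n) (fun x => -(f x)⁻¹) := neg_inv_concaveOn hconc hfp
    refine concaveOn_congr' (fun x hx => ?_) base
    simp only [invPt_invPt hx]

end Stmt2Aux
namespace Stmt2Aux

variable {n : ℕ} {f : (Fin n → ℝ) → ℝ} {s : ℝ}

lemma pow_hom (hfp : ∀ x ∈ posCone n, 0 < f x)
    (hhom : ∀ c : ℝ, 0 < c → ∀ x ∈ posCone n, f (c • x) = c * f x) (hs : 0 < s) :
    ∀ c : ℝ, 0 < c → ∀ x ∈ posCone n,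
      (f (fun i => (c • x) i ^ s)) ^ (1/s) = c * (f (fun i => x i ^ s)) ^ (1/s) := by
  intro c hc x hx
  have hxs := rpow_mem_posCone hx s
  have e1 : (fun i => (c • x) i ^ s) = (c ^ s) • (fun i => x i ^ s) := by
    funext i
    simp only [Pi.smul_apply, smul_eq_mul]
    rw [Real.mul_rpow hc.le (hx i).le]
  rw [e1, hhom (c ^ s) (Real.rpow_pos_of_pos hc s) _ hxs,
    Real.mul_rpow (Real.rpow_pos_of_pos hc s).le (hfp _ hxs).le,
    ← Real.rpow_mul hc.le, mul_one_div, div_self hs.ne', Real.rpow_one]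

lemma pow_mono (hfp : ∀ x ∈ posCone n, 0 < f x)
    (hmono : ∀ x ∈ posCone n, ∀ i, ∀ t : ℝ, 0 < t →
      f x < f (Function.update x i (x i + t))) (hs : 0 < s) :
    ∀ x ∈ posCone n, ∀ i, ∀ t : ℝ, 0 < t →
      (f (fun j => x j ^ s)) ^ (1/s) < (f (fun j => (Function.update x i (x i + t)) j ^ s)) ^ (1/s) := by
  intro x hx i t ht
  have hxs := rpow_mem_posCone hx s
  have e : (fun j => (Function.update x i (x i + t)) j ^ s)
      = Function.update (fun j => x j ^ s) i ((x i + t) ^ s) := by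
    funext j
    rcases eq_or_ne j i with rfl | h
    · simp
    · simp [Function.update_of_ne h]
  have harg : (fun j => x j ^ s) i < (x i + t) ^ s :=
    Real.rpow_lt_rpow (hx i).le (by linarith) hs
  have hlt : f (fun j => x j ^ s) < f (fun j => (Function.update x i (x i + t)) j ^ s) := by
    rw [e]
    exact mono_lt hmono _ hxs i _ harg
  exact Real.rpow_lt_rpow (hfp _ hxs).le hlt (by positivity)

lemma pow_concave (hn : 0 < n) (hs : 0 < s) (hs1 : s ≤ 1)
    (hhom : ∀ c : ℝ, 0 < c → ∀ x ∈ posCone n, f (c • x) = c * f x)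
    (hmono : ∀ x ∈ posCone n, ∀ i, ∀ t : ℝ, 0 < t →
      f x < f (Function.update x i (x i + t)))
    (hconc : ConcaveOn ℝ (posCone n) f) :
    ConcaveOn ℝ (posCone n) (fun x => (f (fun i => x i ^ s)) ^ (1/s)) := by
  have hfp : ∀ x ∈ posCone n, 0 < f x := fpos hn hhom hmono
  have hfrp : ∀ x ∈ posCone n, 0 < (f (fun i => x i ^ s)) ^ (1/s) :=
    fun x hx => Real.rpow_pos_of_pos (hfp _ (rpow_mem_posCone hx s)) _
  refine concave_of_quasi _ hfrp (pow_hom hfp hhom hs) ?_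
  intro x hx y hy a b ha hb hab
  have hu := rpow_mem_posCone hx s
  have hv := rpow_mem_posCone hy s
  have hmid : a • x + b • y ∈ posCone n := posCone_convex hx hy ha hb hab
  have hcombo : a • (fun i => x i ^ s) + b • (fun i => y i ^ s) ∈ posCone n :=
    posCone_convex hu hv ha hb hab
  -- coordinatewise concavity of rpow
  have hcoord : ∀ i, (a • (fun i => x i ^ s) + b • (fun i => y i ^ s)) i
      ≤ (a • x + b • y) i ^ s := by
    intro i
    have := (Real.concaveOn_rpow hs.le hs1).2 (Set.mem_Ici.2 (hx i).le)
      (Set.mem_Ici.2 (hy i).le) ha hb hab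
    simpa [smul_eq_mul] using this
  have h1 : f (a • (fun i => x i ^ s) + b • (fun i => y i ^ s))
      ≤ f (fun i => (a • x + b • y) i ^ s) :=
    mono_le hmono _ hcombo _ (rpow_mem_posCone hmid s) hcoord
  have h2 : a * f (fun i => x i ^ s) + b * f (fun i => y i ^ s)
      ≤ f (a • (fun i => x i ^ s) + b • (fun i => y i ^ s)) := by
    simpa [smul_eq_mul] using hconc.2 hu hv ha hb hab
  have h3 : min (f (fun i => x i ^ s)) (f (fun i => y i ^ s))
      ≤ f (fun i => (a • x + b • y) i ^ s) := by
    have hmin : min (f (fun i => x i ^ s)) (f (fun i => y i ^ s))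
        ≤ a * f (fun i => x i ^ s) + b * f (fun i => y i ^ s) := by
      calc min (f (fun i => x i ^ s)) (f (fun i => y i ^ s))
          = a * min (f (fun i => x i ^ s)) (f (fun i => y i ^ s))
            + b * min (f (fun i => x i ^ s)) (f (fun i => y i ^ s)) := by
            rw [← add_mul, hab, one_mul]
        _ ≤ _ := add_le_add (mul_le_mul_of_nonneg_left (min_le_left _ _) ha)
            (mul_le_mul_of_nonneg_left (min_le_right _ _) hb)
    linarith
  -- now raise to power 1/s
  rcases le_total (f (fun i => x i ^ s)) (f (fun i => y i ^ s)) with h | h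
  · rw [min_eq_left (Real.rpow_le_rpow (hfp _ hu).le h (by positivity))]
    rw [min_eq_left h] at h3
    exact Real.rpow_le_rpow (hfp _ hu).le h3 (by positivity)
  · rw [min_eq_right (Real.rpow_le_rpow (hfp _ hv).le h (by positivity))]
    rw [min_eq_right h] at h3
    exact Real.rpow_le_rpow (hfp _ hv).le h3 (by positivity)

lemma pow_smooth (hfp : ∀ x ∈ posCone n, 0 < f x)
    (hsm : ContDiffOn ℝ (⊤ : ℕ∞) f (posCone n)) (hs : 0 < s) :
    ContDiffOn ℝ (⊤ : ℕ∞) (fun x => (f (fun i => x i ^ s)) ^ (1/s)) (posCone n) := by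
  intro x hx
  refine ContDiffAt.contDiffWithinAt ?_
  have hg : ContDiffAt ℝ (⊤ : ℕ∞) (fun x : Fin n → ℝ => (fun i => x i ^ s)) x := by
    rw [contDiffAt_pi]
    intro i
    exact ((ContinuousLinearMap.proj i : ((Fin n) → ℝ) →L[ℝ] ℝ).contDiff.contDiffAt
      ).rpow_const_of_ne (ne_of_gt (hx i))
  have hfAt : ContDiffAt ℝ (⊤ : ℕ∞) f (fun i => x i ^ s) :=
    hsm.contDiffAt (posCone_isOpen.mem_nhds (rpow_mem_posCone hx s))
  exact (hfAt.comp x hg).rpow_const_of_ne (ne_of_gt (hfp _ (rpow_mem_posCone hx s)))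

lemma pow_isGood (hn : 0 < n) (hs : 0 < s) (hs1 : s ≤ 1) (hf : IsGood n f) :
    IsGood n (fun x => (f (fun i => x i ^ s)) ^ (1/s)) := by
  obtain ⟨hsm, hhom, hmono, hconc, hinv⟩ := hf
  have hfp : ∀ x ∈ posCone n, 0 < f x := fpos hn hhom hmono
  refine ⟨pow_smooth hfp hsm hs, pow_hom hfp hhom hs, pow_mono hfp hmono hs,
    pow_concave hn hs hs1 hhom hmono hconc, ?_⟩
  -- inverse concavity
  obtain ⟨Fsm, Fhom, Fmono, Fconc, Finv⟩ := dual_isGood hn ⟨hsm, hhom, hmono, hconc, hinv⟩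
  have hFsconc : ConcaveOn ℝ (posCone n)
      (fun x => ((f (invPt (fun i => x i ^ s)))⁻¹) ^ (1/s)) :=
    pow_concave hn hs hs1 Fhom Fmono Fconc
  have hFp : ∀ x ∈ posCone n, 0 < (f (invPt x))⁻¹ :=
    fun x hx => inv_pos.2 (hfp _ (invPt_mem hx))
  have hFsp : ∀ x ∈ posCone n, 0 < ((f (invPt (fun i => x i ^ s)))⁻¹) ^ (1/s) :=
    fun x hx => Real.rpow_pos_of_pos (hFp _ (rpow_mem_posCone hx s)) _
  have base := neg_inv_concaveOn hFsconc hFsp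
  refine concaveOn_congr' (fun x hx => ?_) base
  -- show -(F_s x)⁻¹ = -(f_s (invPt x))
  have hxs : (fun i => (invPt x) i ^ s) = invPt (fun i => x i ^ s) := by
    funext i
    simp only [invPt]
    exact Real.inv_rpow (hx i).le s
  have hA : 0 < f (invPt (fun i => x i ^ s)) := hfp _ (invPt_mem (rpow_mem_posCone hx s))
  show -((f (invPt fun i => x i ^ s))⁻¹ ^ (1 / s))⁻¹
      = -(f (fun i => (invPt x) i ^ s)) ^ (1 / s)
  rw [hxs, Real.inv_rpow hA.le, inv_inv]

end Stmt2Aux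

open Stmt2Aux

theorem stmt2 {n : ℕ} (f : (Fin n → ℝ) → ℝ) (r : ℝ)
    (hr : r ∈ Set.Icc (-1 : ℝ) 1) (hr0 : r ≠ 0)
    (hsm : ContDiffOn ℝ (⊤ : ℕ∞) f (posCone n))
    (hhom : ∀ c : ℝ, 0 < c → ∀ x ∈ posCone n, f (c • x) = c * f x)
    (hmono : ∀ x ∈ posCone n, ∀ i, ∀ t : ℝ, 0 < t →
        f x < f (Function.update x i (x i + t)))
    (hconc : ConcaveOn ℝ (posCone n) f)
    (hinv : ConcaveOn ℝ (posCone n) (fun x => -f (invPt x))) :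
    let fr : (Fin n → ℝ) → ℝ := fun x => (f (fun i => x i ^ r)) ^ (1 / r)
    ContDiffOn ℝ (⊤ : ℕ∞) fr (posCone n) ∧
    (∀ c : ℝ, 0 < c → ∀ x ∈ posCone n, fr (c • x) = c * fr x) ∧
    (∀ x ∈ posCone n, ∀ i, ∀ t : ℝ, 0 < t →
        fr x < fr (Function.update x i (x i + t))) ∧
    ConcaveOn ℝ (posCone n) fr ∧
    ConcaveOn ℝ (posCone n) (fun x => -fr (invPt x)) := by
  intro fr
  rcases Nat.eq_zero_or_pos n with hn | hn
  · subst hn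
    have hall : ∀ x : Fin 0 → ℝ, x ∈ posCone 0 := fun x i => i.elim0
    have hf0 : ∀ x : Fin 0 → ℝ, f x = 0 := by
      intro x
      have h2 := hhom 2 two_pos x (hall x)
      have e : (2 : ℝ) • x = x := Subsingleton.elim _ _
      rw [e] at h2; linarith
    have hfr0 : ∀ x, fr x = 0 := by
      intro x
      show (f (fun i => x i ^ r)) ^ (1 / r) = 0
      rw [hf0, Real.zero_rpow (one_div_ne_zero hr0)]
    refine ⟨(contDiffOn_const (c := (0:ℝ))).congr (fun x _ => hfr0 x), ?_, ?_, ?_, ?_⟩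
    · intro c hc x hx; rw [hfr0, hfr0]; ring
    · intro x hx i; exact i.elim0
    · exact concaveOn_congr' (fun x _ => (hfr0 x).symm) (concaveOn_const 0 posCone_convex)
    · exact concaveOn_congr' (fun x _ => by simp [hfr0]) (concaveOn_const 0 posCone_convex)
  · rcases lt_or_gt_of_ne hr0 with hneg | hpos
    · set s : ℝ := -r with hsdef
      have hs : 0 < s := by simp [hsdef]; linarith
      have hs1 : s ≤ 1 := by have := hr.1; simp [hsdef]; linarith
      have hgood := pow_isGood hn hs hs1
        (dual_isGood hn ⟨hsm, hhom, hmono, hconc, hinv⟩)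
      have heq : ∀ x ∈ posCone n, fr x = ((f (invPt (fun i => x i ^ s)))⁻¹) ^ (1 / s) := by
        intro x hx
        show (f (fun i => x i ^ r)) ^ (1 / r) = ((f (invPt (fun i => x i ^ s)))⁻¹) ^ (1 / s)
        have e1 : invPt (fun i => x i ^ s) = (fun i => x i ^ r) := by
          funext i
          simp only [invPt]
          rw [← Real.rpow_neg (hx i).le, hsdef, neg_neg]
        rw [e1]
        have hA : 0 < f (fun i => x i ^ r) :=
          fpos hn hhom hmono _ (rpow_mem_posCone hx r)
        have he2 : -(1 / s) = 1 / r := by rw [hsdef, div_neg, neg_neg]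
        rw [Real.inv_rpow hA.le, ← he2, Real.rpow_neg hA.le]
      exact isGood_congr heq hgood
    · exact pow_isGood hn hpos hr.2 ⟨hsm, hhom, hmono, hconc, hinv⟩
end
end

section
/- For n ≥ k > l ≥ 0, the function (Sₖ/Sₗ)^{1/(k-l)} on the positive cone Γ₊ ⊂ ℝⁿ equals the geometric mean of the quotients S_{j+1}/S_j for j = l,...,k-1, i.e., (Sₖ/Sₗ)^{1/(k-l)} = (∏_{j=l}^{k-1} S_{j+1}/S_j)^{1/(k-l)}, and is concave on Γ₊. -/
/-!
Telescoping, `Sₖ/Sₗ = ∏_{l ≤ j < k} S_{j+1}/S_j`, gives the identity, and exhibits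
`(Sₖ/Sₗ)^{1/(k-l)}` as the geometric mean of the ratios `S_{j+1}/S_j`.

Each ratio `E_{k+1}/E_k` of (unnormalized) elementary symmetric sums is positively homogeneous of
degree one and superadditive on the positive cone (Marcus–Lopes), hence concave. Superadditivity
is proved by induction on `k` from the identity
`(k+2) E_{k+2}(x)/E_{k+1}(x) = ∑ᵢ xᵢ qᵢ / (xᵢ + qᵢ)`, with `qᵢ = E_{k+1}(x̂ᵢ)/E_k(x̂ᵢ)` the ratio
with `xᵢ` removed, together with the superadditivity and monotonicity of `(a, s) ↦ a s / (a + s)`.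

A weighted geometric mean of positive concave functions is concave, because
`u ↦ ∏ uⱼ^{wⱼ}` is monotone, homogeneous and, by weighted AM–GM, superadditive.
-/

noncomputable section

/-- The normalized `k`-th elementary symmetric polynomial. -/
def eS (n k : ℕ) (x : Fin n → ℝ) : ℝ :=
  ((n.choose k : ℝ))⁻¹ * ∑ A ∈ Finset.powersetCard k (Finset.univ : Finset (Fin n)), ∏ i ∈ A, x i

open Finset

theorem concaveOn_of_superadditive_of_homogeneous {𝕜 E β : Type*} [Semiring 𝕜] [PartialOrder 𝕜]
    [AddCommMonoid E] [Module 𝕜 E] [AddCommMonoid β] [PartialOrder β] [Module 𝕜 β]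
    {s : Set E} {f : E → β} (hs : Convex 𝕜 s) (hsmul : ∀ c : 𝕜, 0 < c → ∀ x ∈ s, c • x ∈ s)
    (hadd : ∀ x ∈ s, ∀ y ∈ s, f x + f y ≤ f (x + y))
    (hhom : ∀ c : 𝕜, 0 < c → ∀ x ∈ s, f (c • x) = c • f x) :
    ConcaveOn 𝕜 s f := by
  refine concaveOn_iff_forall_pos.2 ⟨hs, fun x hx y hy a b ha hb _ => ?_⟩
  rw [← hhom a ha x hx, ← hhom b hb y hy]
  exact hadd _ (hsmul a ha x hx) _ (hsmul b hb y hy)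

lemma convex_setOf_forall_mem_pos {ι : Type*} (A : Finset ι) :
    Convex ℝ {x : ι → ℝ | ∀ i ∈ A, 0 < x i} :=
  convex_pi fun _ _ => convex_Ioi 0

lemma prod_Ico_div_of_ne_zero {K : Type*} [CommGroupWithZero K] {f : ℕ → K} {m n : ℕ}
    (hmn : m ≤ n) (hf : ∀ j ∈ Icc m n, f j ≠ 0) : ∏ j ∈ Ico m n, f (j + 1) / f j = f n / f m := by
  induction n, hmn using Nat.le_induction with
  | base => simp [div_self (hf m (by simp))]
  | succ n hmn ih =>
    rw [prod_Ico_succ_top hmn, ih fun j hj => hf j (Icc_subset_Icc_right n.le_succ hj),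
      div_mul_div_cancel₀' (hf n (by simp [hmn]))]

lemma mul_div_add_add_mul_div_add_le {a b s t : ℝ} (ha : 0 < a) (hb : 0 < b) (hs : 0 < s)
    (ht : 0 < t) : a * s / (a + s) + b * t / (b + t) ≤ (a + b) * (s + t) / (a + b + (s + t)) := by
  rw [div_add_div _ _ (by positivity) (by positivity), div_le_div_iff₀ (by positivity) (by positivity)]
  nlinarith [sq_nonneg (a * t - b * s), mul_pos ha hb, mul_pos hs ht, mul_pos ha ht, mul_pos hb hs]

lemma mul_div_add_le_mul_div_add {a s u : ℝ} (ha : 0 < a) (hs : 0 < s) (hsu : s ≤ u) :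
    a * s / (a + s) ≤ a * u / (a + u) := by
  rw [div_le_div_iff₀ (by positivity) (by linarith)]
  nlinarith [mul_le_mul_of_nonneg_left hsu (sq_nonneg a)]

section GeomMean

variable {ι : Type*} {T : Finset ι} {w u v : ι → ℝ}

lemma prod_mul_rpow_of_sum_eq_one (hw1 : ∑ j ∈ T, w j = 1) {c : ℝ} (hc : 0 < c)
    (hu : ∀ j ∈ T, 0 ≤ u j) : ∏ j ∈ T, (c * u j) ^ w j = c * ∏ j ∈ T, u j ^ w j := by
  rw [prod_congr rfl fun j hj => Real.mul_rpow hc.le (hu j hj), prod_mul_distrib,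
    ← Real.rpow_sum_of_pos hc, hw1, Real.rpow_one]

lemma prod_rpow_add_prod_rpow_le (hw : ∀ j ∈ T, 0 ≤ w j) (hw1 : ∑ j ∈ T, w j = 1)
    (hu : ∀ j ∈ T, 0 < u j) (hv : ∀ j ∈ T, 0 < v j) :
    ∏ j ∈ T, u j ^ w j + ∏ j ∈ T, v j ^ w j ≤ ∏ j ∈ T, (u j + v j) ^ w j := by
  have hp : ∀ j ∈ T, 0 < u j + v j := fun j hj => add_pos (hu j hj) (hv j hj)
  have hsplit : ∀ z : ι → ℝ, (∀ j ∈ T, 0 ≤ z j) → ∏ j ∈ T, z j ^ w j =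
      (∏ j ∈ T, (z j / (u j + v j)) ^ w j) * ∏ j ∈ T, (u j + v j) ^ w j := by
    intro z hz
    rw [← prod_mul_distrib]
    refine prod_congr rfl fun j hj => ?_
    rw [← Real.mul_rpow (div_nonneg (hz j hj) (hp j hj).le) (hp j hj).le,
      div_mul_cancel₀ _ (hp j hj).ne']
  have amgm : ∀ z : ι → ℝ, (∀ j ∈ T, 0 ≤ z j) →
      ∏ j ∈ T, (z j / (u j + v j)) ^ w j ≤ ∑ j ∈ T, w j * (z j / (u j + v j)) := fun z hz =>
    Real.geom_mean_le_arith_mean_weighted T w _ hw hw1 fun j hj => div_nonneg (hz j hj) (hp j hj).le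
  have hu' : ∀ j ∈ T, 0 ≤ u j := fun j hj => (hu j hj).le
  have hv' : ∀ j ∈ T, 0 ≤ v j := fun j hj => (hv j hj).le
  calc ∏ j ∈ T, u j ^ w j + ∏ j ∈ T, v j ^ w j
      = (∏ j ∈ T, (u j / (u j + v j)) ^ w j + ∏ j ∈ T, (v j / (u j + v j)) ^ w j) *
          ∏ j ∈ T, (u j + v j) ^ w j := by rw [add_mul, ← hsplit u hu', ← hsplit v hv']
    _ ≤ (∑ j ∈ T, w j * (u j / (u j + v j)) + ∑ j ∈ T, w j * (v j / (u j + v j))) *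
          ∏ j ∈ T, (u j + v j) ^ w j := by
        gcongr
        · exact prod_nonneg fun j hj => (Real.rpow_pos_of_pos (hp j hj) _).le
        · exact amgm u hu'
        · exact amgm v hv'
    _ = ∏ j ∈ T, (u j + v j) ^ w j := by
        rw [← sum_add_distrib, sum_congr rfl fun j hj => ?_, hw1, one_mul]
        rw [← mul_add, ← add_div, div_self (hp j hj).ne', mul_one]

theorem concaveOn_prod_rpow {E : Type*} [AddCommMonoid E] [Module ℝ E] {s : Set E}
    {f : ι → E → ℝ} (hw : ∀ j ∈ T, 0 ≤ w j) (hw1 : ∑ j ∈ T, w j = 1)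
    (hf : ∀ j ∈ T, ConcaveOn ℝ s (f j)) (hpos : ∀ j ∈ T, ∀ x ∈ s, 0 < f j x) :
    ConcaveOn ℝ s fun x => ∏ j ∈ T, f j x ^ w j := by
  -- `∑ w = 1` makes `T` nonempty, so convexity of `s` can be read off some `f j₀`.
  obtain ⟨j₀, hj₀⟩ := nonempty_of_sum_ne_zero (hw1 ▸ one_ne_zero)
  refine concaveOn_iff_forall_pos.2 ⟨(hf j₀ hj₀).1, fun x hx y hy a b ha hb hab => ?_⟩
  have hfx : ∀ j ∈ T, 0 < a * f j x := fun j hj => mul_pos ha (hpos j hj x hx)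
  have hfy : ∀ j ∈ T, 0 < b * f j y := fun j hj => mul_pos hb (hpos j hj y hy)
  calc a • ∏ j ∈ T, f j x ^ w j + b • ∏ j ∈ T, f j y ^ w j
      = ∏ j ∈ T, (a * f j x) ^ w j + ∏ j ∈ T, (b * f j y) ^ w j := by
        rw [prod_mul_rpow_of_sum_eq_one hw1 ha fun j hj => (hpos j hj x hx).le,
          prod_mul_rpow_of_sum_eq_one hw1 hb fun j hj => (hpos j hj y hy).le]
        rfl
    _ ≤ ∏ j ∈ T, (a * f j x + b * f j y) ^ w j := prod_rpow_add_prod_rpow_le hw hw1 hfx hfy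
    _ ≤ ∏ j ∈ T, f j (a • x + b • y) ^ w j := by
        refine prod_le_prod (fun j hj => ?_) fun j hj => ?_
        · exact (Real.rpow_pos_of_pos (add_pos (hfx j hj) (hfy j hj)) _).le
        · exact Real.rpow_le_rpow (add_pos (hfx j hj) (hfy j hj)).le
            ((hf j hj).2 hx hy ha.le hb.le hab) (hw j hj)

end GeomMean

namespace Finset

variable {ι R : Type*} [CommSemiring R]

def esymm (A : Finset ι) (k : ℕ) (x : ι → R) : R :=
  ∑ B ∈ A.powersetCard k, ∏ i ∈ B, x i

@[simp] lemma esymm_zero (A : Finset ι) (x : ι → R) : A.esymm 0 x = 1 := by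
  simp [esymm]

lemma esymm_one (A : Finset ι) (x : ι → R) : A.esymm 1 x = ∑ i ∈ A, x i := by
  simp [esymm, powersetCard_one]

lemma esymm_smul (A : Finset ι) (k : ℕ) (c : R) (x : ι → R) :
    A.esymm k (c • x) = c ^ k * A.esymm k x := by
  rw [esymm, esymm, mul_sum]
  refine sum_congr rfl fun B hB => ?_
  simp only [Pi.smul_apply, smul_eq_mul, prod_mul_distrib, prod_const, (mem_powersetCard.1 hB).2]

lemma esymm_pos {A : Finset ι} {k : ℕ} {x : ι → ℝ} (hk : k ≤ #A) (hx : ∀ i ∈ A, 0 < x i) :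
    0 < A.esymm k x :=
  sum_pos (fun _ hB => prod_pos fun i hi => hx i ((mem_powersetCard.1 hB).1 hi))
    (powersetCard_nonempty.2 hk)

variable [DecidableEq ι]

lemma mul_esymm_erase {A : Finset ι} {i : ι} (hi : i ∈ A) (k : ℕ) (x : ι → R) :
    x i * (A.erase i).esymm k x = ∑ C ∈ A.powersetCard (k + 1) with i ∈ C, ∏ j ∈ C, x j := by
  rw [esymm, mul_sum]
  refine sum_nbij' (insert i) (fun C => C.erase i) ?_ ?_ ?_ ?_ ?_
  all_goals intro B hB
  all_goals simp only [mem_filter, mem_powersetCard, subset_erase] at hB ⊢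
  · grind
  · grind
  · exact erase_insert hB.1.2
  · exact insert_erase hB.2
  · rw [prod_insert hB.1.2]

lemma powersetCard_filter_notMem (A : Finset ι) (i : ι) (k : ℕ) :
    {C ∈ A.powersetCard k | i ∉ C} = (A.erase i).powersetCard k := by
  ext C
  simp only [mem_filter, mem_powersetCard, subset_erase]
  tauto

lemma esymm_succ_eq_esymm_erase_add {A : Finset ι} {i : ι} (hi : i ∈ A) (k : ℕ) (x : ι → R) :
    A.esymm (k + 1) x = (A.erase i).esymm (k + 1) x + x i * (A.erase i).esymm k x := by
  rw [mul_esymm_erase hi, esymm, esymm, ← powersetCard_filter_notMem,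
    sum_filter_not_add_sum_filter]

lemma sum_mul_esymm_erase (A : Finset ι) (k : ℕ) (x : ι → R) :
    ∑ i ∈ A, x i * (A.erase i).esymm k x = (k + 1) * A.esymm (k + 1) x := by
  calc ∑ i ∈ A, x i * (A.erase i).esymm k x
      = ∑ i ∈ A, ∑ C ∈ A.powersetCard (k + 1) with i ∈ C, ∏ j ∈ C, x j :=
        sum_congr rfl fun i hi => mul_esymm_erase hi k x
    _ = ∑ C ∈ A.powersetCard (k + 1), ∑ _i ∈ C, ∏ j ∈ C, x j := by
        refine sum_comm' fun i C => ?_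
        simp only [mem_filter, mem_powersetCard]
        grind
    _ = (k + 1) * A.esymm (k + 1) x := by
        rw [esymm, mul_sum]
        refine sum_congr rfl fun C hC => ?_
        rw [sum_const, (mem_powersetCard.1 hC).2, nsmul_eq_mul]
        push_cast; rfl

variable {A : Finset ι} {k : ℕ} {x : ι → ℝ}

lemma esymm_erase_pos {i : ι} (hi : i ∈ A) (hk : k + 1 ≤ #A) (hx : ∀ i ∈ A, 0 < x i) :
    0 < (A.erase i).esymm k x :=
  esymm_pos (by rw [card_erase_of_mem hi]; omega) fun j hj => hx j (mem_of_mem_erase hj)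

lemma natCast_add_two_mul_esymm_div (hk : k + 2 ≤ #A) (hx : ∀ i ∈ A, 0 < x i) :
    (k + 2) * (A.esymm (k + 2) x / A.esymm (k + 1) x) = ∑ i ∈ A,
      x i * ((A.erase i).esymm (k + 1) x / (A.erase i).esymm k x) /
        (x i + (A.erase i).esymm (k + 1) x / (A.erase i).esymm k x) := by
  rw [← mul_div_assoc, show (k : ℝ) + 2 = (k + 1 : ℕ) + 1 by push_cast; ring,
    ← sum_mul_esymm_erase, sum_div]
  refine sum_congr rfl fun i hi => ?_
  have ha := esymm_erase_pos (k := k + 1) hi hk hx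
  have hb := esymm_erase_pos (k := k) hi (by omega) hx
  have hxi := hx i hi
  rw [esymm_succ_eq_esymm_erase_add hi]
  field_simp
  ring

theorem esymm_succ_div_add_le (hk : k + 1 ≤ #A) {y : ι → ℝ} (hx : ∀ i ∈ A, 0 < x i)
    (hy : ∀ i ∈ A, 0 < y i) :
    A.esymm (k + 1) x / A.esymm k x + A.esymm (k + 1) y / A.esymm k y
      ≤ A.esymm (k + 1) (x + y) / A.esymm k (x + y) := by
  induction k generalizing A with
  | zero => simp [esymm_one, sum_add_distrib]
  | succ k ih =>
    have hxy : ∀ i ∈ A, 0 < (x + y) i := fun i hi => add_pos (hx i hi) (hy i hi)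
    rw [← mul_le_mul_iff_right₀ (by positivity : (0 : ℝ) < k + 2), mul_add,
      natCast_add_two_mul_esymm_div hk hx, natCast_add_two_mul_esymm_div hk hy,
      natCast_add_two_mul_esymm_div hk hxy, ← sum_add_distrib]
    refine sum_le_sum fun i hi => ?_
    have hA : k + 1 ≤ #(A.erase i) := by rw [card_erase_of_mem hi]; omega
    have hxe : ∀ j ∈ A.erase i, 0 < x j := fun j hj => hx j (mem_of_mem_erase hj)
    have hye : ∀ j ∈ A.erase i, 0 < y j := fun j hj => hy j (mem_of_mem_erase hj)
    have hqx := div_pos (esymm_erase_pos hi hk hx) (esymm_erase_pos (k := k) hi (by omega) hx)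
    have hqy := div_pos (esymm_erase_pos hi hk hy) (esymm_erase_pos (k := k) hi (by omega) hy)
    exact (mul_div_add_add_mul_div_add_le (hx i hi) (hy i hi) hqx hqy).trans
      (mul_div_add_le_mul_div_add (hxy i hi) (by positivity) (ih hA hxe hye))

theorem concaveOn_esymm_succ_div (hk : k + 1 ≤ #A) :
    ConcaveOn ℝ {x : ι → ℝ | ∀ i ∈ A, 0 < x i} fun x => A.esymm (k + 1) x / A.esymm k x := by
  refine concaveOn_of_superadditive_of_homogeneous (convex_setOf_forall_mem_pos A)
    (fun c hc x hx i hi => mul_pos hc (hx i hi)) (fun x hx y hy => esymm_succ_div_add_le hk hx hy)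
    fun c hc x hx => ?_
  have hE := esymm_pos (k := k) (by omega) hx
  rw [esymm_smul, esymm_smul, smul_eq_mul]
  field_simp
  ring

end Finset

lemma eS_pos {n k : ℕ} (hk : k ≤ n) {x : Fin n → ℝ} (hx : x ∈ posCone n) : 0 < eS n k x :=
  mul_pos (inv_pos.2 (Nat.cast_pos.2 (Nat.choose_pos hk)))
    (esymm_pos (by simpa using hk) fun i _ => hx i)

theorem concaveOn_eS_succ_div_eS {n k : ℕ} (hk : k + 1 ≤ n) :
    ConcaveOn ℝ (posCone n) fun x => eS n (k + 1) x / eS n k x := by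
  have hcone : posCone n = {x | ∀ i ∈ (univ : Finset (Fin n)), 0 < x i} := by simp [posCone]
  rw [hcone]
  refine ((concaveOn_esymm_succ_div (by simpa using hk)).smul
    (by positivity : (0 : ℝ) ≤ (n.choose (k + 1) : ℝ)⁻¹ / (n.choose k : ℝ)⁻¹)).congr
    fun x _ => ?_
  simp only [eS, smul_eq_mul, esymm, mul_div_mul_comm]

theorem stmt10 {n k l : ℕ} (hl : l < k) (hk : k ≤ n) :
    (∀ x ∈ posCone n,
      (eS n k x / eS n l x) ^ ((1 : ℝ) / ((k : ℝ) - l))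
        = (∏ j ∈ Finset.Ico l k, eS n (j + 1) x / eS n j x) ^ ((1 : ℝ) / ((k : ℝ) - l))) ∧
    ConcaveOn ℝ (posCone n)
      (fun x => (eS n k x / eS n l x) ^ ((1 : ℝ) / ((k : ℝ) - l))) := by
  have htelescope : ∀ x ∈ posCone n,
      eS n k x / eS n l x = ∏ j ∈ Ico l k, eS n (j + 1) x / eS n j x := fun x hx =>
    (prod_Ico_div_of_ne_zero hl.le fun j hj => (eS_pos ((mem_Icc.1 hj).2.trans hk) hx).ne').symm
  have hw : ∑ _j ∈ Ico l k, (1 : ℝ) / ((k : ℝ) - l) = 1 := by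
    have : (l : ℝ) < k := by exact_mod_cast hl
    rw [sum_const, Nat.card_Ico, nsmul_eq_mul, Nat.cast_sub hl.le, mul_one_div,
      div_self (sub_ne_zero.2 this.ne')]
  refine ⟨fun x hx => by rw [htelescope x hx], ?_⟩
  have hmem : ∀ j ∈ Ico l k, j + 1 ≤ n := fun j hj => by have := mem_Ico.1 hj; omega
  have hratio : ∀ j ∈ Ico l k, ∀ x ∈ posCone n, 0 < eS n (j + 1) x / eS n j x :=
    fun j hj x hx => div_pos (eS_pos (hmem j hj) hx) (eS_pos (Nat.le_of_succ_le (hmem j hj)) hx)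
  refine (concaveOn_prod_rpow (f := fun j x => eS n (j + 1) x / eS n j x)
    (fun _ _ => one_div_nonneg.2 (sub_nonneg.2 (by exact_mod_cast hl.le))) hw
    (fun j hj => concaveOn_eS_succ_div_eS (hmem j hj)) hratio).congr fun x hx => ?_
  rw [htelescope x hx]
  exact Real.finsetProd_rpow _ _ (fun j hj => (hratio j hj x hx).le) _
end
end

section
/- Let F be a C² function on the cone of positive definite symmetric n×n matrices such that F*(A) := -F(A⁻¹) is concave. Then for every positive definite symmetric matrix A and every symmetric matrix X, the inequality (D²F(A))(X,X) + 2·tr(DF(A)·X·A⁻¹·X) ≥ 0 holds; that is, writing Ḟ^{kl} for the first derivative and F̈^{kl,pq} for the second derivative of F at A, one has (F̈^{kl,pq} + 2Ḟ^{kp}(A⁻¹)^{lq})X_{kl}X_{pq} ≥ 0. -/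
noncomputable section

attribute [local instance] Matrix.normedAddCommGroup Matrix.normedSpace

/-- The open cone of positive definite (symmetric) real matrices. -/
def pdSet (n : ℕ) : Set (Matrix (Fin n) (Fin n) ℝ) := {A | A.PosDef}

namespace Stmt11Aux

open Topology Filter Matrix Set

variable {n : ℕ}

abbrev MM (n : ℕ) := Matrix (Fin n) (Fin n) ℝ

lemma hasDerivAt_matrix {f : ℝ → MM n} {f' : MM n} {t : ℝ} :
    HasDerivAt f f' t ↔ ∀ i j, HasDerivAt (fun s => f s i j) (f' i j) t := by
  constructor
  · intro h i j
    exact (hasDerivAt_pi.mp ((hasDerivAt_pi (φ' := f')).mp h i) j)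
  · intro h
    exact (hasDerivAt_pi (φ' := f')).mpr fun i => hasDerivAt_pi.mpr (h i)

lemma differentiableAt_matrix {f : ℝ → MM n} {t : ℝ}
    (h : ∀ i j, DifferentiableAt ℝ (fun s => f s i j) t) : DifferentiableAt ℝ f t := by
  have : HasDerivAt f (Matrix.of fun i j => deriv (fun s => f s i j) t) t :=
    hasDerivAt_matrix.mpr fun i j => (h i j).hasDerivAt
  exact this.differentiableAt

lemma HasDerivAt.matrix_mul {f g : ℝ → MM n} {f' g' : MM n} {t : ℝ}
    (hf : HasDerivAt f f' t) (hg : HasDerivAt g g' t) :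
    HasDerivAt (fun s => f s * g s) (f' * g t + f t * g') t := by
  rw [hasDerivAt_matrix] at *
  intro i j
  simp only [Matrix.mul_apply, Matrix.add_apply]
  have : HasDerivAt (fun s => ∑ k, f s i k * g s k j)
      (∑ k, (f' i k * g t k j + f t i k * g' k j)) t :=
    HasDerivAt.fun_sum fun k _ => (hf i k).mul (hg k j)
  simpa [Finset.sum_add_distrib] using this

lemma differentiableAt_matrix_det {f : ℝ → MM n} {t : ℝ}
    (h : ∀ i j, DifferentiableAt ℝ (fun s => f s i j) t) :
    DifferentiableAt ℝ (fun s => (f s).det) t := by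
  simp only [Matrix.det_apply']
  apply DifferentiableAt.fun_sum
  intro σ _
  exact (differentiableAt_const _).mul
    (HasDerivAt.fun_finsetProd (fun i _ => (h (σ i) i).hasDerivAt)).differentiableAt

lemma differentiableAt_matrix_adjugate {f : ℝ → MM n} {t : ℝ}
    (h : ∀ i j, DifferentiableAt ℝ (fun s => f s i j) t) :
    DifferentiableAt ℝ (fun s => (f s).adjugate) t := by
  apply differentiableAt_matrix
  intro i j
  simp only [Matrix.adjugate_apply]
  apply differentiableAt_matrix_det
  intro k l
  simp only [Matrix.updateRow_apply]
  by_cases hk : k = j <;> simp [hk, h]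

lemma isHermitian_of_isSymm {A : MM n} (h : A.IsSymm) : A.IsHermitian := by
  rw [Matrix.IsHermitian, Matrix.conjTranspose_eq_transpose_of_trivial]; exact h

lemma isSymm_of_posDef {A : MM n} (h : A.PosDef) : A.IsSymm := by
  rw [Matrix.IsSymm, ← Matrix.conjTranspose_eq_transpose_of_trivial]; exact h.1

lemma posDef_perturb {A X : MM n} (hA : A.PosDef) (hX : X.IsSymm) :
    ∀ᶠ t in 𝓝 (0 : ℝ), (A + t • X).PosDef := by
  rcases Nat.eq_zero_or_pos n with hn | hn
  · subst hn
    filter_upwards with t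
    have : A + t • X = A := by ext i j; exact i.elim0
    rw [this]; exact hA
  haveI : Nonempty (Fin n) := ⟨⟨0, hn⟩⟩
  set q : (Fin n → ℝ) → ℝ := fun x => dotProduct x (A *ᵥ x) with hq
  set r : (Fin n → ℝ) → ℝ := fun x => dotProduct x (X *ᵥ x) with hr
  have hqc : Continuous q := by
    simp only [hq, dotProduct, Matrix.mulVec, Finset.sum_fn]
    fun_prop
  have hrc : Continuous r := by
    simp only [hr, dotProduct, Matrix.mulVec, Finset.sum_fn]
    fun_prop
  set S := Metric.sphere (0 : Fin n → ℝ) 1 with hS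
  have hSc : IsCompact S := isCompact_sphere _ _
  have hSne : S.Nonempty := NormedSpace.sphere_nonempty.mpr zero_le_one
  obtain ⟨x₀, hx₀S, hmin⟩ := hSc.exists_isMinOn hSne hqc.continuousOn
  obtain ⟨x₁, hx₁S, hmax⟩ := hSc.exists_isMaxOn hSne (continuous_abs.comp hrc).continuousOn
  set m := q x₀ with hm
  set K := |r x₁| with hK
  have hKnn : 0 ≤ K := abs_nonneg _
  have hmpos : 0 < m := by
    have : x₀ ≠ 0 := by
      intro h0
      rw [mem_sphere_zero_iff_norm, h0, norm_zero] at hx₀S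
      norm_num at hx₀S
    have := hA.dotProduct_mulVec_pos this
    simpa [hm, hq, star_trivial] using this
  have hε : 0 < m / (K + 1) := by positivity
  filter_upwards [Metric.ball_mem_nhds (0:ℝ) hε] with t ht
  rw [Metric.mem_ball, Real.dist_eq, sub_zero] at ht
  have hXh : X.IsHermitian := isHermitian_of_isSymm hX
  have hsm : (t • X).IsHermitian := by
    rw [Matrix.IsHermitian, Matrix.conjTranspose_smul, star_trivial, hXh.eq]
  refine Matrix.PosDef.of_dotProduct_mulVec_pos (hA.1.add hsm) ?_
  intro x hx
  have hc : 0 < ‖x‖ := norm_pos_iff.mpr hx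
  set u := ‖x‖⁻¹ • x with hu
  have huS : u ∈ S := by
    rw [hS, mem_sphere_zero_iff_norm, hu, norm_smul, norm_inv, norm_norm,
      inv_mul_cancel₀ hc.ne']
  have hxu : x = ‖x‖ • u := by
    rw [hu, smul_smul, mul_inv_cancel₀ hc.ne', one_smul]
  have hid : dotProduct (star x) ((A + t • X) *ᵥ x) = ‖x‖^2 * (q u + t * r u) := by
    rw [star_trivial]
    conv_lhs => rw [hxu]
    rw [Matrix.add_mulVec, Matrix.smul_mulVec]
    simp only [Matrix.mulVec_smul, smul_dotProduct, dotProduct_smul,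
      dotProduct_add, smul_eq_mul, hq, hr]
    ring
  rw [hid]
  have h1 : m ≤ q u := hmin huS
  have h2 : |r u| ≤ K := hmax huS
  have h3 : |t| * K < m := by
    calc |t| * K ≤ |t| * (K + 1) := by nlinarith [abs_nonneg t]
    _ < (m / (K+1)) * (K+1) := by
        apply mul_lt_mul_of_pos_right ht; positivity
    _ = m := by field_simp
  have h4 : -(|t| * K) ≤ t * r u := by
    have h5 := neg_abs_le (t * r u)
    have habs : |t * r u| ≤ |t| * K := by
      rw [abs_mul]
      exact mul_le_mul_of_nonneg_left h2 (abs_nonneg t)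
    linarith
  have : 0 < q u + t * r u := by linarith
  positivity

lemma hasDerivAt_line (B X : MM n) (t : ℝ) :
    HasDerivAt (fun t : ℝ => B + t • X) X t := by
  exact (((hasDerivAt_id t).smul_const X).const_add B).congr_deriv (one_smul ℝ X)

lemma dir_eq {u : Set (MM n)} {h : MM n → ℝ}
    {H H' : MM n →L[ℝ] ℝ} {B X : MM n}
    (h1 : HasFDerivWithinAt h H u B) (h2 : HasFDerivWithinAt h H' u B)
    (hmem : ∀ᶠ t in 𝓝 (0:ℝ), B + t • X ∈ u) : H X = H' X := by
  have hpre : (fun t : ℝ => B + t • X) ⁻¹' u ∈ 𝓝 (0:ℝ) := hmem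
  have key : ∀ (H'' : MM n →L[ℝ] ℝ), HasFDerivWithinAt h H'' u B →
      HasDerivAt (fun t : ℝ => h (B + t • X)) (H'' X) 0 := by
    intro H'' hH
    have := hH.comp_hasDerivWithinAt_of_eq (0:ℝ)
      ((hasDerivAt_line B X 0).hasDerivWithinAt (s := (fun t : ℝ => B + t • X) ⁻¹' u))
      (mapsTo_preimage _ _) (by simp)
    exact (this.hasDerivAt hpre)
  exact (key H h1).unique (key H' h2)

end Stmt11Aux

open Stmt11Aux Topology Filter Matrix Set in
theorem stmt11 {n : ℕ} (F : Matrix (Fin n) (Fin n) ℝ → ℝ)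
    (hF : ContDiffOn ℝ 2 F (pdSet n))
    (hconc : ConcaveOn ℝ (pdSet n) (fun A => -F A⁻¹)) :
    ∀ A ∈ pdSet n, ∀ X : Matrix (Fin n) (Fin n) ℝ, X.IsSymm →
      0 ≤ fderivWithin ℝ (fun B => fderivWithin ℝ F (pdSet n) B X) (pdSet n) A X
        + 2 * ∑ k, ∑ l, ∑ p, ∑ q,
            fderivWithin ℝ F (pdSet n) A (Matrix.single k p 1)
              * (A⁻¹ l q) * X k l * X p q := by
  intro A hA X hX
  set s : Set (MM n) := pdSet n with hs
  have hApd : A.PosDef := hA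
  have hdetA : IsUnit A.det := isUnit_iff_ne_zero.mpr hApd.det_pos.ne'
  have hAinv : A⁻¹.PosDef := hApd.inv
  have hAis : A⁻¹.IsSymm := isSymm_of_posDef hAinv
  set Y : MM n := A⁻¹ * X * A⁻¹ with hY
  have hYs : Y.IsSymm := by
    rw [Matrix.IsSymm, hY, Matrix.transpose_mul, Matrix.transpose_mul, hAis.eq, hX.eq,
      mul_assoc]
  -- a uniform radius of positive-definiteness along the line through A⁻¹ in direction Y
  obtain ⟨ε₁, hε₁, hpd⟩ : ∃ ε₁ > 0, ∀ t : ℝ, |t| < ε₁ → (A⁻¹ + t • Y).PosDef := by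
    have h := posDef_perturb hAinv hYs
    rw [Metric.eventually_nhds_iff] at h
    obtain ⟨ε, hε, h⟩ := h
    exact ⟨ε, hε, fun t ht => h (by rwa [Real.dist_eq, sub_zero])⟩
  set c : ℝ → MM n := fun t => (A⁻¹ + t • Y)⁻¹ with hcdef
  have hcs : ∀ t : ℝ, |t| < ε₁ → c t ∈ s := fun t ht => (hpd t ht).inv
  have hdet : ∀ t : ℝ, |t| < ε₁ → IsUnit (A⁻¹ + t • Y).det :=
    fun t ht => isUnit_iff_ne_zero.mpr (hpd t ht).det_pos.ne'
  have h0ε : |(0:ℝ)| < ε₁ := by simpa using hε₁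
  have hc0 : c 0 = A := by
    rw [hcdef]
    simp only [zero_smul, add_zero]
    exact Matrix.nonsing_inv_nonsing_inv A hdetA
  -- differentiability of c
  have hent : ∀ (t : ℝ) (i j : Fin n), DifferentiableAt ℝ (fun t' : ℝ => (A⁻¹ + t' • Y) i j) t := by
    intro t i j
    simp only [Matrix.add_apply, Matrix.smul_apply, smul_eq_mul]
    fun_prop
  have hcdiff : ∀ t : ℝ, |t| < ε₁ → DifferentiableAt ℝ c t := by
    intro t ht
    have hinvd : ∀ B : MM n, B⁻¹ = (B.det)⁻¹ • B.adjugate := fun B => by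
      rw [Matrix.inv_def, Ring.inverse_eq_inv']
    have hre : c = fun t' => ((A⁻¹ + t' • Y).det)⁻¹ • (A⁻¹ + t' • Y).adjugate :=
      funext fun t' => hinvd _
    rw [hre]
    exact ((differentiableAt_matrix_det (hent t)).inv ((hpd t ht).det_pos.ne')).smul
      (differentiableAt_matrix_adjugate (hent t))
  set cd : ℝ → MM n := fun t => -(c t * (Y * c t)) with hcddef
  have hcder : ∀ t : ℝ, |t| < ε₁ → HasDerivAt c (cd t) t := by
    intro t ht
    have h₁ := (hcdiff t ht).hasDerivAt
    have hline : HasDerivAt (fun t' : ℝ => A⁻¹ + t' • Y) Y t := hasDerivAt_line _ _ t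
    have hmul := HasDerivAt.matrix_mul hline h₁
    have heq : (fun t' => (A⁻¹ + t' • Y) * c t') =ᶠ[𝓝 t] (fun _ => (1 : MM n)) := by
      have hop : ∀ᶠ t' in 𝓝 t, |t'| < ε₁ :=
        (isOpen_lt (by fun_prop) continuous_const).mem_nhds ht
      filter_upwards [hop] with t' ht'
      exact Matrix.mul_nonsing_inv _ (hdet t' ht')
    have hconst : HasDerivAt (fun _ : ℝ => (1 : MM n))
        (Y * c t + (A⁻¹ + t • Y) * deriv c t) t :=
      hmul.congr_of_eventuallyEq heq.symm
    have hzero : Y * c t + (A⁻¹ + t • Y) * deriv c t = 0 :=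
      hconst.unique (hasDerivAt_const t 1)
    have hzero' : (A⁻¹ + t • Y) * deriv c t + Y * c t = 0 := by
      rw [add_comm]; exact hzero
    have h2 : (A⁻¹ + t • Y) * deriv c t = -(Y * c t) :=
      eq_neg_of_add_eq_zero_left hzero' 
    have h3 : c t * ((A⁻¹ + t • Y) * deriv c t) = deriv c t := by
      rw [← mul_assoc, hcdef]
      rw [Matrix.nonsing_inv_mul _ (hdet t ht), one_mul]
    rw [h2] at h3
    have hsolve : deriv c t = cd t := by
      rw [hcddef, ← h3, mul_neg]
    rw [← hsolve]; exact h₁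
  have hcd0 : cd 0 = -X := by
    rw [hcddef]
    simp only [hc0, hY]
    rw [mul_assoc (A⁻¹ * X), Matrix.nonsing_inv_mul _ hdetA, mul_one,
      ← mul_assoc, Matrix.mul_nonsing_inv _ hdetA, one_mul]
  -- extract the local derivative function f'
  have h2F := hF A hA
  rw [show (2 : WithTop ℕ∞) = 1 + 1 from by norm_num] at h2F
  rw [contDiffWithinAt_succ_iff_hasFDerivWithinAt (by simp)] at h2F
  obtain ⟨u, hu, -, f', hf'd, hf'c⟩ := h2F
  rw [Set.insert_eq_self.mpr hA] at hu
  obtain ⟨O, hOopen, hAO, hOsub⟩ := mem_nhdsWithin.mp hu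
  have hFd : DifferentiableOn ℝ F s := hF.differentiableOn (by norm_num)
  -- agreement of fderivWithin with f' in symmetric directions on O ∩ s
  have hag : ∀ B ∈ O ∩ s, ∀ Z : MM n, Z.IsSymm → fderivWithin ℝ F s B Z = f' B Z := by
    intro B hB Z hZ
    refine dir_eq (u := O ∩ s) ((hFd B hB.2).hasFDerivWithinAt.mono inter_subset_right)
      ((hf'd B (hOsub hB)).mono hOsub) ?_
    have e1 : ∀ᶠ t : ℝ in 𝓝 0, B + t • Z ∈ s := posDef_perturb hB.2 hZ
    have e2 : ∀ᶠ t : ℝ in 𝓝 0, B + t • Z ∈ O := by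
      have hcont : Continuous fun t : ℝ => B + t • Z := by fun_prop
      have := hcont.continuousAt (x := 0)
      have hmem : O ∈ 𝓝 (B + (0:ℝ) • Z) := by
        rw [show B + (0:ℝ) • Z = B by simp]
        exact hOopen.mem_nhds hB.1
      exact this.preimage_mem_nhds hmem
    filter_upwards [e1, e2] with t ht1 ht2 using ⟨ht2, ht1⟩
  have hAOs : A ∈ O ∩ s := ⟨hAO, hA⟩
  -- Φ : second derivative data
  have hf'diff : DifferentiableWithinAt ℝ f' u A := hf'c.differentiableWithinAt one_ne_zero
  set Φ := fderivWithin ℝ f' u A with hΦdef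
  have hΦ : HasFDerivWithinAt f' Φ u A := hf'diff.hasFDerivWithinAt
  -- the open parameter set J
  set J : Set ℝ := {t | |t| < ε₁ ∧ c t ∈ O} with hJ
  have hJopen : IsOpen J := by
    rw [isOpen_iff_mem_nhds]
    rintro t ⟨ht1, ht2⟩
    have e1 : ∀ᶠ t' in 𝓝 t, |t'| < ε₁ :=
      (isOpen_lt (by fun_prop) continuous_const).mem_nhds ht1
    have e2 : ∀ᶠ t' in 𝓝 t, c t' ∈ O :=
      ((hcdiff t ht1).continuousAt).preimage_mem_nhds (hOopen.mem_nhds ht2)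
    filter_upwards [e1, e2] with t' h1 h2 using ⟨h1, h2⟩
  have h0J : (0:ℝ) ∈ J := ⟨h0ε, by rw [hc0]; exact hAO⟩
  have hcmapJ : MapsTo c J (O ∩ s) := fun t ht => ⟨ht.2, hcs t ht.1⟩
  -- the composite function and its derivative
  set φ : ℝ → ℝ := fun t => F (c t) with hφdef
  set ρ : ℝ → ℝ := fun t => f' (c t) (cd t) with hρdef
  have hφ' : ∀ t ∈ J, HasDerivAt φ (ρ t) t := by
    intro t ht
    have h1 : HasFDerivWithinAt F (f' (c t)) (O ∩ s) (c t) :=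
      (hf'd (c t) (hOsub (hcmapJ ht))).mono hOsub
    have h2 := h1.comp_hasDerivWithinAt t (hcder t ht.1).hasDerivWithinAt hcmapJ
    exact h2.hasDerivAt (hJopen.mem_nhds ht)
  -- derivative of cd at 0
  have hcd' : HasDerivAt cd (X * (A⁻¹ * X) + X * (A⁻¹ * X)) 0 := by
    have h1 : HasDerivAt (fun t => Y * c t) ((0:MM n) * c 0 + Y * cd 0) 0 :=
      HasDerivAt.matrix_mul (hasDerivAt_const 0 Y) (hcder 0 h0ε)
    have h2 : HasDerivAt (fun t => c t * (Y * c t))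
        (cd 0 * (Y * c 0) + c 0 * ((0:MM n) * c 0 + Y * cd 0)) 0 :=
      HasDerivAt.matrix_mul (hcder 0 h0ε) h1
    have h3 := h2.neg
    have h4 : -(cd 0 * (Y * c 0) + c 0 * ((0:MM n) * c 0 + Y * cd 0))
        = X * (A⁻¹ * X) + X * (A⁻¹ * X) := by
      rw [hc0, hcd0, hY]
      have e1 : A⁻¹ * X * A⁻¹ * A = A⁻¹ * X := by
        rw [mul_assoc (A⁻¹ * X), Matrix.nonsing_inv_mul _ hdetA, mul_one]
      have e3 : A * (A⁻¹ * X * A⁻¹ * X) = X * (A⁻¹ * X) := by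
        rw [← mul_assoc, ← mul_assoc, ← mul_assoc, Matrix.mul_nonsing_inv _ hdetA, one_mul,
          mul_assoc]
      rw [e1, zero_mul, zero_add, mul_neg, mul_neg, e3, neg_mul, neg_add_rev, neg_neg]
    rw [h4] at h3
    exact h3
  -- derivative of ρ at 0
  have hρder : HasDerivAt ρ (Φ X X + f' A (X * (A⁻¹ * X) + X * (A⁻¹ * X))) 0 := by
    have hcw : HasDerivWithinAt c (cd 0) J 0 := (hcder 0 h0ε).hasDerivWithinAt
    have hclm : HasDerivWithinAt (fun t => f' (c t)) (Φ (cd 0)) J 0 :=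
      (hΦ.mono hOsub).comp_hasDerivWithinAt_of_eq 0 hcw hcmapJ hc0.symm
    have hcdw : HasDerivWithinAt cd (X * (A⁻¹ * X) + X * (A⁻¹ * X)) J 0 :=
      hcd'.hasDerivWithinAt
    have happ := hclm.clm_apply hcdw
    rw [hc0, hcd0] at happ
    have happ' := happ.hasDerivAt (hJopen.mem_nhds h0J)
    simpa [map_neg] using happ'
  -- convexity of φ near 0
  obtain ⟨δ, hδpos, hδsub⟩ := Metric.isOpen_iff.mp hJopen 0 h0J
  have hIoo : Set.Ioo (-δ) δ ⊆ J := by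
    intro t ht
    apply hδsub
    rw [Metric.mem_ball, Real.dist_eq, sub_zero, abs_lt]
    exact ⟨ht.1, ht.2⟩
  have hconv : ConvexOn ℝ (Set.Ioo (-δ) δ) φ := by
    refine ⟨convex_Ioo _ _, ?_⟩
    intro x hx y hy a b ha hb hab
    have hxε : |x| < ε₁ := (hIoo hx).1
    have hyε : |y| < ε₁ := (hIoo hy).1
    have hxs : A⁻¹ + x • Y ∈ s := hpd x hxε
    have hys : A⁻¹ + y • Y ∈ s := hpd y hyε
    have hcomb : a • (A⁻¹ + x • Y) + b • (A⁻¹ + y • Y) = A⁻¹ + (a * x + b * y) • Y := by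
      rw [smul_add, smul_add, smul_smul, smul_smul, add_smul]
      have hid : a • (A⁻¹ : MM n) + b • A⁻¹ = A⁻¹ := by
        rw [← add_smul, hab, one_smul]
      rw [add_add_add_comm, hid]
    have h := hconc.2 hxs hys ha hb hab
    simp only [smul_eq_mul] at h ⊢
    rw [hcomb] at h
    have e1 : φ (a * x + b * y) = F ((A⁻¹ + (a * x + b * y) • Y)⁻¹) := rfl
    have e2 : φ x = F ((A⁻¹ + x • Y)⁻¹) := rfl
    have e3 : φ y = F ((A⁻¹ + y • Y)⁻¹) := rfl
    rw [e1, e2, e3]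
    linarith
  -- positivity of the second derivative at 0
  have hmono : ∀ t ∈ Set.Ioo (0:ℝ) δ, ρ 0 ≤ ρ t := by
    intro t ht
    have h0mem : (0:ℝ) ∈ Set.Ioo (-δ) δ := ⟨by linarith, hδpos⟩
    have htmem : t ∈ Set.Ioo (-δ) δ := ⟨by linarith [ht.1], ht.2⟩
    have s1 := hconv.le_slope_of_hasDerivAt h0mem htmem ht.1 (hφ' 0 h0J)
    have s2 := hconv.slope_le_of_hasDerivAt h0mem htmem ht.1 (hφ' t (hIoo htmem))
    linarith
  have hD : 0 ≤ Φ X X + f' A (X * (A⁻¹ * X) + X * (A⁻¹ * X)) := by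
    have htend := hasDerivAt_iff_tendsto_slope.mp hρder
    have htend' : Filter.Tendsto (slope ρ 0) (𝓝[>] 0)
        (𝓝 (Φ X X + f' A (X * (A⁻¹ * X) + X * (A⁻¹ * X)))) :=
      htend.mono_left (nhdsWithin_mono _ (fun x hx => ne_of_gt hx))
    refine ge_of_tendsto htend' ?_
    filter_upwards [Ioo_mem_nhdsGT_of_mem (Set.left_mem_Ico.mpr hδpos)] with t ht
    rw [slope_def_field]
    have h5 := hmono t ht
    have h6 : (0:ℝ) ≤ t - 0 := by linarith [ht.1]
    apply div_nonneg _ h6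
    linarith
  -- identification of the first statement term
  set g : MM n → ℝ := fun B => fderivWithin ℝ F s B X with hgdef
  have hGu : HasFDerivWithinAt (fun B => f' B X) (Φ.flip X) u A := by
    have h1 := hΦ.clm_apply (hasFDerivWithinAt_const X A u)
    refine h1.congr_fderiv ?_
    ext Z
    rw [ContinuousLinearMap.add_apply]
    change f' A 0 + _ = _
    rw [map_zero, zero_add]
  have hGw : HasFDerivWithinAt g (Φ.flip X) (O ∩ s) A := by
    refine (hGu.mono hOsub).congr ?_ ?_
    · intro B hB; exact hag B hB X hX
    · exact hag A hAOs X hX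
  have hGs : HasFDerivWithinAt g (Φ.flip X) s A :=
    (hasFDerivWithinAt_inter (hOopen.mem_nhds hAO)).mp (by rwa [Set.inter_comm] at hGw)
  have hQ1 : fderivWithin ℝ g s A X = Φ X X := by
    have hg' : HasFDerivWithinAt g (fderivWithin ℝ g s A) s A :=
      hGs.differentiableWithinAt.hasFDerivWithinAt
    have := dir_eq hg' hGs (posDef_perturb hApd hX)
    rw [this]
    exact ContinuousLinearMap.flip_apply _ _ _
  -- identification of the second statement term
  have hXAX : (X * (A⁻¹ * X)).IsSymm := by
    rw [Matrix.IsSymm, Matrix.transpose_mul, Matrix.transpose_mul, hAis.eq, hX.eq, mul_assoc]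
  have key : ∀ (L : MM n →L[ℝ] ℝ),
      ∑ k, ∑ l, ∑ p, ∑ q, L (Matrix.single k p 1) * (A⁻¹ l q) * X k l * X p q
        = L (X * (A⁻¹ * X)) := by
    intro L
    have hmat : X * (A⁻¹ * X)
        = ∑ k, ∑ p, (∑ l, ∑ q, (A⁻¹ l q) * X k l * X p q) • Matrix.single k p 1 := by
      conv_lhs => rw [Matrix.matrix_eq_sum_single (X * (A⁻¹ * X))]
      refine Finset.sum_congr rfl fun k _ => Finset.sum_congr rfl fun p _ => ?_
      rw [Matrix.smul_single, smul_eq_mul, mul_one]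
      have hentry : (X * (A⁻¹ * X)) k p = ∑ l, ∑ q, A⁻¹ l q * X k l * X p q := by
        rw [Matrix.mul_apply]
        refine Finset.sum_congr rfl fun l _ => ?_
        rw [Matrix.mul_apply, Finset.mul_sum]
        refine Finset.sum_congr rfl fun q _ => ?_
        rw [hX.apply p q]
        ring
      rw [hentry]
    rw [hmat]
    simp only [_root_.map_sum, _root_.map_smul, smul_eq_mul]
    refine Finset.sum_congr rfl fun k _ => ?_
    rw [Finset.sum_comm]
    refine Finset.sum_congr rfl fun p _ => ?_
    rw [Finset.sum_mul]
    refine Finset.sum_congr rfl fun l _ => ?_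
    rw [Finset.sum_mul]
    refine Finset.sum_congr rfl fun q _ => ?_
    ring
  have hSigma : ∑ k, ∑ l, ∑ p, ∑ q, fderivWithin ℝ F s A (Matrix.single k p 1)
      * (A⁻¹ l q) * X k l * X p q = f' A (X * (A⁻¹ * X)) := by
    rw [key (fderivWithin ℝ F s A)]
    exact hag A hAOs _ hXAX
  rw [hQ1, hSigma]
  rw [map_add] at hD
  linarith
end
end
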